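/- Fix d ≥ 3 and define v_n(d) by v_1(d) = 1 and v_n(d) = ((2n-1)!!)^{d-1} − ∑_{k=1}^{n-1} C(n-1,k-1)((2n-2k-1)!!)^{d-1} v_k(d) for n > 1. Then v_n(d) ~ ((2n-1)!!)^{d-1} as n → ∞; more precisely, ((2n-1)!!)^{d-1}(1 − C/n) ≤ v_n(d) ≤ ((2n-1)!!)^{d-1} for some constant C and all sufficiently large n. -/

import Mathlib

/-!
Write `a n = ((2n-1)!!)^(d-1)`. One term of Vandermonde's identity gives `C(n,k)² ≤ C(2n,2k)`,
which after clearing factorials reads `(2k-1)!! (2n-2k-1)!! C(n,k) ≤ (2n-1)!!`. Since `d - 1 ≥ 2`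
and `C(n-1,k-1) ≤ C(n,k)`, the `k`-th term of the recursion with `v k` replaced by `a k` is at most
`a n / C(n,k)`. Induction then gives `0 ≤ v n ≤ a n`, hence
`a n (1 - ∑_{0<k<n} 1/C(n,k)) ≤ v n ≤ a n`, and that sum is at most `4/n`: the terms `k = 1, n-1`
contribute `2/n`, the remaining `n - 3` at most `1/C(n,2)` each.
-/

open Nat Filter

/-- `(2n-1)!! = 1·3·5⋯(2n-1)`, the product of the first `n` odd positive integers. -/
def oddDF (n : ℕ) : ℕ := ∏ i ∈ Finset.range n, (2 * i + 1)

lemma choose_le_choose_of_le_of_add_le {n j k : ℕ} (hjk : j ≤ k) (hkn : j + k ≤ n) :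
    n.choose j ≤ n.choose k := by
  wlog hk : 2 * k ≤ n generalizing k
  · rw [← choose_symm (by omega : k ≤ n)]
    exact this (by omega) (by omega) (by omega)
  induction k, hjk using Nat.le_induction with
  | base => rfl
  | succ k _ ih =>
    exact (ih (by omega) (by omega)).trans (choose_le_succ_of_lt_half_left (by omega))

lemma choose_pred_le_choose {n k : ℕ} (hk : 1 ≤ k) (hkn : k ≤ n) :
    (n - 1).choose (k - 1) ≤ n.choose k := by
  obtain ⟨n, rfl⟩ : ∃ n', n = n' + 1 := ⟨n - 1, by omega⟩
  obtain ⟨k, rfl⟩ : ∃ k', k = k' + 1 := ⟨k - 1, by omega⟩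
  simp [choose_succ_succ']

lemma sq_choose_le_choose_add_add (n k : ℕ) : n.choose k ^ 2 ≤ (n + n).choose (k + k) := by
  rw [add_choose_eq, sq]
  exact Finset.single_le_sum (f := fun ij : ℕ × ℕ => n.choose ij.1 * n.choose ij.2)
    (a := (k, k)) (fun _ _ => Nat.zero_le _) (by simp)

lemma oddDF_pos (n : ℕ) : 0 < oddDF n :=
  Finset.prod_pos fun i _ => by omega

lemma oddDF_succ (n : ℕ) : oddDF (n + 1) = oddDF n * (2 * n + 1) :=
  Finset.prod_range_succ _ _

lemma oddDF_mul_two_pow_mul_factorial (n : ℕ) : oddDF n * 2 ^ n * n ! = (2 * n)! := by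
  induction n with
  | zero => rfl
  | succ n ih =>
    rw [show 2 * (n + 1) = 2 * n + 1 + 1 by ring, factorial_succ (2 * n + 1),
      factorial_succ (2 * n), ← ih, oddDF_succ, factorial_succ]
    ring

lemma oddDF_mul_oddDF_mul_choose_le (k m : ℕ) :
    oddDF k * oddDF m * (k + m).choose k ≤ oddDF (k + m) := by
  set c := (k + m).choose k
  have hX : 0 < 2 ^ k * k ! * (2 ^ m * m !) * c := by
    have := choose_pos (Nat.le_add_right k m); positivity
  refine Nat.le_of_mul_le_mul_right ?_ hX
  calc oddDF k * oddDF m * c * (2 ^ k * k ! * (2 ^ m * m !) * c)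
      = (oddDF k * 2 ^ k * k !) * (oddDF m * 2 ^ m * m !) * c ^ 2 := by ring
    _ ≤ (2 * k)! * (2 * m)! * (2 * k + 2 * m).choose (2 * k) := by
      rw [oddDF_mul_two_pow_mul_factorial, oddDF_mul_two_pow_mul_factorial,
        show 2 * k + 2 * m = k + m + (k + m) by ring, two_mul k]
      exact Nat.mul_le_mul_left _ (sq_choose_le_choose_add_add (k + m) k)
    _ = oddDF (k + m) * 2 ^ (k + m) * (k + m)! := by
      have h := choose_mul_factorial_mul_factorial (Nat.le_add_right (2 * k) (2 * m))
      rw [add_tsub_cancel_left] at h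
      rw [oddDF_mul_two_pow_mul_factorial, mul_add, ← h]; ring
    _ = oddDF (k + m) * (2 ^ k * k ! * (2 ^ m * m !) * c) := by
      have h := choose_mul_factorial_mul_factorial (Nat.le_add_right k m)
      rw [add_tsub_cancel_left] at h
      rw [← h, pow_add]; ring

lemma choose_pred_mul_pow_mul_pow_le {e n k : ℕ} (he : 2 ≤ e) (hk : 1 ≤ k) (hkn : k ≤ n) :
    ((n - 1).choose (k - 1) : ℝ) * (oddDF (n - k) : ℝ) ^ e * (oddDF k : ℝ) ^ e ≤
      (oddDF n : ℝ) ^ e * (n.choose k : ℝ)⁻¹ := by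
  set c := n.choose k
  have hc : 0 < c := choose_pos hkn
  have key : (n - 1).choose (k - 1) * c * (oddDF (n - k) * oddDF k) ^ e ≤ oddDF n ^ e :=
    calc (n - 1).choose (k - 1) * c * (oddDF (n - k) * oddDF k) ^ e
        ≤ c ^ 2 * (oddDF (n - k) * oddDF k) ^ e := by
          rw [sq]; gcongr; exact choose_pred_le_choose hk hkn
      _ ≤ c ^ e * (oddDF (n - k) * oddDF k) ^ e := by
          gcongr
      _ = (oddDF k * oddDF (n - k) * (k + (n - k)).choose k) ^ e := by
          rw [Nat.add_sub_of_le hkn]; ring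
      _ ≤ oddDF n ^ e := by
          gcongr; simpa [Nat.add_sub_of_le hkn] using oddDF_mul_oddDF_mul_choose_le k (n - k)
  rw [← div_eq_mul_inv, le_div_iff₀ (by exact_mod_cast hc)]
  calc _ = (((n - 1).choose (k - 1) * c * (oddDF (n - k) * oddDF k) ^ e : ℕ) : ℝ) := by
        push_cast; ring
    _ ≤ _ := by exact_mod_cast key

lemma inv_choose_le_inv_choose {n j k : ℕ} (hjk : j ≤ k) (hkn : j + k ≤ n) :
    (n.choose k : ℝ)⁻¹ ≤ (n.choose j : ℝ)⁻¹ :=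
  inv_anti₀ (by exact_mod_cast choose_pos (by omega : j ≤ n))
    (by exact_mod_cast choose_le_choose_of_le_of_add_le hjk hkn)

lemma sum_inv_choose_le_one (n : ℕ) :
    ∑ k ∈ Finset.Icc 1 (n - 1), (n.choose k : ℝ)⁻¹ ≤ 1 := by
  calc ∑ k ∈ Finset.Icc 1 (n - 1), (n.choose k : ℝ)⁻¹
      ≤ ∑ _k ∈ Finset.Icc 1 (n - 1), (n : ℝ)⁻¹ := by
        refine Finset.sum_le_sum fun k hk => ?_
        rw [Finset.mem_Icc] at hk
        simpa using inv_choose_le_inv_choose (n := n) hk.1 (by omega)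
    _ = ((n - 1 : ℕ) : ℝ) / n := by simp [div_eq_mul_inv]
    _ ≤ 1 := div_le_one_of_le₀ (by exact_mod_cast n.sub_le 1) n.cast_nonneg

lemma sum_inv_choose_le_four_div (n : ℕ) :
    ∑ k ∈ Finset.Icc 1 (n - 1), (n.choose k : ℝ)⁻¹ ≤ 4 / n := by
  rcases lt_or_ge n 3 with hn | hn
  · interval_cases n <;> norm_num
  have hsplit : Finset.Icc 1 (n - 1) = insert 1 (insert (n - 1) (Finset.Icc 2 (n - 2))) := by
    ext k; simp only [Finset.mem_insert, Finset.mem_Icc]; omega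
  have hmiddle : ∑ k ∈ Finset.Icc 2 (n - 2), (n.choose k : ℝ)⁻¹ ≤ 2 / n :=
    calc ∑ k ∈ Finset.Icc 2 (n - 2), (n.choose k : ℝ)⁻¹
        ≤ ∑ _k ∈ Finset.Icc 2 (n - 2), (n.choose 2 : ℝ)⁻¹ := by
          refine Finset.sum_le_sum fun k hk => ?_
          rw [Finset.mem_Icc] at hk
          exact inv_choose_le_inv_choose hk.1 (by omega)
      _ = ((n - 3 : ℕ) : ℝ) * (2 / (n * (n - 1))) := by
          rw [Finset.sum_const, Nat.card_Icc, cast_choose_two, nsmul_eq_mul, inv_div,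
            show n - 2 + 1 - 2 = n - 3 by omega]
      _ ≤ 2 / n := by
          have : (3 : ℝ) ≤ n := by exact_mod_cast hn
          rw [cast_sub hn, Nat.cast_ofNat, mul_div_assoc',
            div_le_div_iff₀ (by nlinarith) (by positivity)]
          nlinarith
  rw [hsplit, Finset.sum_insert (by simp; omega), Finset.sum_insert (by simp; omega),
    choose_one_right, choose_symm_of_eq_add (show n = n - 1 + 1 by omega), choose_one_right]
  linarith [show (4 : ℝ) / n = (n : ℝ)⁻¹ + (n : ℝ)⁻¹ + 2 / n by ring]

lemma sub_sum_mem_Icc {a v b ε : ℕ → ℝ} {n : ℕ}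
    (hb : ∀ k, 1 ≤ k → k < n → 0 ≤ b k)
    (hba : ∀ k, 1 ≤ k → k < n → b k * a k ≤ a n * ε k)
    (hv : ∀ k, 1 ≤ k → k < n → 0 ≤ v k ∧ v k ≤ a k) :
    a n - ∑ k ∈ Finset.Icc 1 (n - 1), b k * v k ∈
      Set.Icc (a n * (1 - ∑ k ∈ Finset.Icc 1 (n - 1), ε k)) (a n) := by
  have hterm : ∀ k ∈ Finset.Icc 1 (n - 1), 0 ≤ b k * v k ∧ b k * v k ≤ a n * ε k := by
    intro k hk
    rw [Finset.mem_Icc] at hk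
    obtain ⟨hvk0, hvka⟩ := hv k hk.1 (by omega)
    have hbk := hb k hk.1 (by omega)
    exact ⟨mul_nonneg hbk hvk0,
      (mul_le_mul_of_nonneg_left hvka hbk).trans (hba k hk.1 (by omega))⟩
  have hlo := Finset.sum_le_sum fun k hk => (hterm k hk).2
  have hhi := Finset.sum_nonneg fun k hk => (hterm k hk).1
  rw [← Finset.mul_sum] at hlo
  constructor <;> linarith

lemma nonneg_and_le_of_eq_sub_sum {a v : ℕ → ℝ} {b ε : ℕ → ℕ → ℝ}
    (ha : ∀ n, 0 ≤ a n) (hb : ∀ n k, 1 ≤ k → k < n → 0 ≤ b n k)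
    (hba : ∀ n k, 1 ≤ k → k < n → b n k * a k ≤ a n * ε n k)
    (hε : ∀ n, ∑ k ∈ Finset.Icc 1 (n - 1), ε n k ≤ 1) (hv1 : 0 ≤ v 1 ∧ v 1 ≤ a 1)
    (hrec : ∀ n, 1 < n → v n = a n - ∑ k ∈ Finset.Icc 1 (n - 1), b n k * v k) :
    ∀ n, 1 ≤ n → 0 ≤ v n ∧ v n ≤ a n := by
  intro n
  induction n using Nat.strong_induction_on with
  | _ n ih =>
    intro hn
    rcases hn.eq_or_lt with rfl | hn
    · exact hv1
    obtain ⟨hlo, hhi⟩ :=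
      hrec n hn ▸ sub_sum_mem_Icc (hb n) (hba n) fun k hk hkn => ih k hkn hk
    exact ⟨(mul_nonneg (ha n) (sub_nonneg.2 (hε n))).trans hlo, hhi⟩

lemma tendsto_div_of_mul_one_sub_div_le {a v : ℕ → ℝ} {C : ℝ} (ha : ∀ n, 0 < a n)
    (h : ∀ᶠ n : ℕ in atTop, a n * (1 - C / n) ≤ v n ∧ v n ≤ a n) :
    Tendsto (fun n => v n / a n) atTop (nhds 1) := by
  have hC : Tendsto (fun n : ℕ => 1 - C / n) atTop (nhds 1) := by
    simpa using tendsto_const_nhds.sub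
      ((tendsto_const_nhds (x := C)).div_atTop (tendsto_natCast_atTop_atTop (R := ℝ)))
  refine tendsto_of_tendsto_of_tendsto_of_le_of_le' hC tendsto_const_nhds ?_ ?_
  · filter_upwards [h] with n hn
    rw [le_div_iff₀ (ha n), mul_comm]
    exact hn.1
  · filter_upwards [h] with n hn
    exact (div_le_one (ha n)).2 hn.2

theorem stmt11 (d : ℕ) (hd : 3 ≤ d) (v : ℕ → ℝ) (hv1 : v 1 = 1)
    (hrec : ∀ n : ℕ, 1 < n →
      v n = (oddDF n : ℝ) ^ (d - 1) -
        ∑ k ∈ Finset.Icc 1 (n - 1),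
          ((n - 1).choose (k - 1) : ℝ) * (oddDF (n - k) : ℝ) ^ (d - 1) * v k) :
    Tendsto (fun n : ℕ => v n / (oddDF n : ℝ) ^ (d - 1)) atTop (nhds 1) ∧
      ∃ C : ℝ, ∀ᶠ n : ℕ in atTop,
        (oddDF n : ℝ) ^ (d - 1) * (1 - C / n) ≤ v n ∧
          v n ≤ (oddDF n : ℝ) ^ (d - 1) := by
  have ha : ∀ n, (0 : ℝ) < (oddDF n : ℝ) ^ (d - 1) := fun n => by
    have := oddDF_pos n; positivity
  have hb : ∀ n k, 1 ≤ k → k < n →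
      (0 : ℝ) ≤ ((n - 1).choose (k - 1) : ℝ) * (oddDF (n - k) : ℝ) ^ (d - 1) :=
    fun _ _ _ _ => by positivity
  have hba : ∀ n k, 1 ≤ k → k < n →
      ((n - 1).choose (k - 1) : ℝ) * (oddDF (n - k) : ℝ) ^ (d - 1) *
        (oddDF k : ℝ) ^ (d - 1) ≤ (oddDF n : ℝ) ^ (d - 1) * (n.choose k : ℝ)⁻¹ :=
    fun _ _ hk hkn => choose_pred_mul_pow_mul_pow_le (by omega) hk hkn.le
  have hv : ∀ n, 1 ≤ n → 0 ≤ v n ∧ v n ≤ (oddDF n : ℝ) ^ (d - 1) :=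
    nonneg_and_le_of_eq_sub_sum (fun n => (ha n).le) hb hba sum_inv_choose_le_one
      (by simp [hv1, oddDF]) hrec
  have hbounds : ∀ᶠ n : ℕ in atTop,
      (oddDF n : ℝ) ^ (d - 1) * (1 - 4 / n) ≤ v n ∧ v n ≤ (oddDF n : ℝ) ^ (d - 1) := by
    filter_upwards [eventually_ge_atTop 2] with n hn
    obtain ⟨hlo, hhi⟩ := hrec n hn ▸ sub_sum_mem_Icc (hb n) (hba n) fun k hk _ => hv k hk
    refine ⟨le_trans ?_ hlo, hhi⟩
    gcongr
    exact sum_inv_choose_le_four_div n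
  exact ⟨tendsto_div_of_mul_one_sub_div_le ha hbounds, 4, hbounds⟩
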